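/- Under the same hypotheses as the constraint-gap theorem, choosing λ = ‖y*‖₂²/(2ε), any ε-minimizer x^N of F satisfies f(x^N) − f(x*) ≤ ε and ‖√W x^N‖₂ ≤ 6ε/‖y*‖₂ (in particular the bound 2R_y/λ + √(2ε/λ) evaluates to 4ε/R_y + 2ε/R_y where R_y = ‖y*‖₂). -/

import Mathlib

open Matrix

section

open scoped ComplexOrder

/-- The positive semidefinite square root of a positive semidefinite matrix
(the definition `Matrix.PosSemidef.sqrt` of the older Mathlib, since removed). -/
noncomputable def Matrix.PosSemidef.sqrt {n 𝕜 : Type*} [Fintype n] [RCLike 𝕜] [DecidableEq n]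
    {A : Matrix n n 𝕜} (hA : A.PosSemidef) : Matrix n n 𝕜 :=
  hA.1.eigenvectorUnitary.1 * diagonal ((↑) ∘ (√·) ∘ hA.1.eigenvalues) *
    (star hA.1.eigenvectorUnitary : Matrix n n 𝕜)

end

/-! Comparing `F(x^N) ≤ min F + ε ≤ F(x*) + ε = f(x*) + ε` with the Lagrangian inequality
`f(x*) + ⟨y*, √W x^N⟩ ≤ f(x^N)` gives `f(x^N) − f(x*) ≤ ε` and, by Cauchy–Schwarz,
`(λ/2) t² ≤ ε + R_y t` for `t = ‖√W x^N‖`. Solving this quadratic inequality gives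
`t ≤ 2R_y/λ + √(2ε/λ)`, which equals `6ε/R_y` for `λ = R_y²/(2ε)`. -/

namespace Matrix.PosSemidef

open scoped ComplexOrder

variable {n 𝕜 : Type*} [Fintype n] [RCLike 𝕜] [DecidableEq n] {A : Matrix n n 𝕜}

theorem sqrt_mul_self (hA : A.PosSemidef) : hA.sqrt * hA.sqrt = A := by
  have hU : (star hA.1.eigenvectorUnitary : Matrix n n 𝕜) * hA.1.eigenvectorUnitary.1 = 1 :=
    Unitary.coe_star_mul_self _
  conv_rhs => rw [hA.1.spectral_theorem, Unitary.conjStarAlgAut_apply]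
  simp only [Matrix.PosSemidef.sqrt]
  rw [show ∀ a b c d e f : Matrix n n 𝕜, a * b * c * (d * e * f) = a * b * (c * d) * e * f from
    fun a b c d e f => by simp only [Matrix.mul_assoc], hU, Matrix.mul_one,
    Matrix.mul_assoc (hA.1.eigenvectorUnitary.1 : Matrix n n 𝕜), diagonal_mul_diagonal]
  congr 3
  funext i
  simp [← RCLike.ofReal_mul, Real.mul_self_sqrt (hA.eigenvalues_nonneg i)]

theorem sqrt_isHermitian (hA : A.PosSemidef) : hA.sqrt.IsHermitian := by
  simp only [IsHermitian, PosSemidef.sqrt, conjTranspose_mul, diagonal_conjTranspose,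
    star_eq_conjTranspose, conjTranspose_conjTranspose, Matrix.mul_assoc]
  congr 3
  funext i
  simp

end Matrix.PosSemidef

theorem Matrix.PosSemidef.dotProduct_mulVec_eq_dotProduct_sqrt_mulVec {n : Type*} [Fintype n] [DecidableEq n]
    {A : Matrix n n ℝ} (hA : A.PosSemidef) (x : n → ℝ) :
    x ⬝ᵥ A *ᵥ x = hA.sqrt *ᵥ x ⬝ᵥ hA.sqrt *ᵥ x := by
  conv_lhs => rw [← hA.sqrt_mul_self]
  rw [← mulVec_mulVec, dotProduct_mulVec, ← mulVec_transpose,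
    ← conjTranspose_eq_transpose_of_trivial, hA.sqrt_isHermitian.eq]

theorem le_add_sqrt_of_half_mul_sq_le {lam ε R t : ℝ} (hlam : 0 < lam) (hε : 0 ≤ ε) (hR : 0 ≤ R)
    (h : lam / 2 * t ^ 2 ≤ ε + R * t) :
    t ≤ 2 * R / lam + √(2 * ε / lam) := by
  set a := 2 * R / lam
  set b := √(2 * ε / lam)
  have ha : 0 ≤ a := by positivity
  have hb : 0 ≤ b := Real.sqrt_nonneg _
  have hR_eq : R = lam / 2 * a := by simp only [a]; field_simp
  have hε_eq : ε = lam / 2 * b ^ 2 := by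
    rw [Real.sq_sqrt (by positivity)]; field_simp
  by_contra! hlt
  -- `t (t - a) > (a + b) b ≥ b²` contradicts `t² - a t ≤ b²`, which is `h` divided by `λ/2`.
  have hquad : t ^ 2 - a * t ≤ b ^ 2 := by
    rw [hR_eq, hε_eq] at h
    nlinarith
  nlinarith [mul_nonneg ha hb]

theorem neg_dotProduct_le_sqrt_mul_sqrt {ι : Type*} [Fintype ι] (y v : ι → ℝ) :
    -(y ⬝ᵥ v) ≤ √(y ⬝ᵥ y) * √(v ⬝ᵥ v) := by
  simpa [dotProduct, sq] using Real.sum_mul_le_sqrt_mul_sqrt Finset.univ (-y) v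

theorem penalty_constraint_gap {ι : Type*} [Fintype ι] (f : (ι → ℝ) → ℝ) (S : Matrix ι ι ℝ)
    {lam ε : ℝ} (hlam : 0 < lam) (hε : 0 ≤ ε) {xstar ystar xN : ι → ℝ}
    (hfeas : S *ᵥ xstar = 0)
    (hlag : f xstar - ystar ⬝ᵥ S *ᵥ xstar ≤ f xN - ystar ⬝ᵥ S *ᵥ xN)
    (hN : f xN + lam / 2 * (S *ᵥ xN ⬝ᵥ S *ᵥ xN) ≤ f xstar + ε) :
    f xN - f xstar ≤ ε ∧
    √(S *ᵥ xN ⬝ᵥ S *ᵥ xN) ≤ 2 * √(ystar ⬝ᵥ ystar) / lam + √(2 * ε / lam) := by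
  set v := S *ᵥ xN
  have hvv : 0 ≤ v ⬝ᵥ v := Finset.sum_nonneg fun i _ => mul_self_nonneg (v i)
  rw [hfeas, dotProduct_zero] at hlag
  refine ⟨by nlinarith, le_add_sqrt_of_half_mul_sq_le hlam hε (Real.sqrt_nonneg _) ?_⟩
  rw [Real.sq_sqrt hvv]
  linarith [neg_dotProduct_le_sqrt_mul_sqrt ystar v]

theorem two_mul_div_add_sqrt_eq {R ε : ℝ} (hR : 0 < R) (hε : 0 < ε) :
    2 * R / (R ^ 2 / (2 * ε)) + √(2 * ε / (R ^ 2 / (2 * ε))) = 4 * ε / R + 2 * ε / R := by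
  have hsq : 2 * ε / (R ^ 2 / (2 * ε)) = (2 * ε / R) ^ 2 := by field_simp
  rw [hsq, Real.sqrt_sq (by positivity)]
  field_simp
  ring

theorem stmt6_general {N : ℕ} (f : (Fin N → ℝ) → ℝ)
    (W : Matrix (Fin N) (Fin N) ℝ) (hW : W.PosSemidef)
    (lam ε : ℝ) (hε : 0 < ε)
    (xstar ystar xF xN : Fin N → ℝ)
    (hRy : 0 < Real.sqrt (ystar ⬝ᵥ ystar))
    (hlamdef : lam = (ystar ⬝ᵥ ystar) / (2 * ε))
    (hfeas : hW.sqrt.mulVec xstar = 0)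
    (hlag : ∀ x : Fin N → ℝ,
      f xstar - ystar ⬝ᵥ hW.sqrt.mulVec xstar ≤ f x - ystar ⬝ᵥ hW.sqrt.mulVec x)
    (hxF : ∀ y : Fin N → ℝ,
      f xF + lam / 2 * (xF ⬝ᵥ W.mulVec xF) ≤ f y + lam / 2 * (y ⬝ᵥ W.mulVec y))
    (hN : f xN + lam / 2 * (xN ⬝ᵥ W.mulVec xN)
        - (f xF + lam / 2 * (xF ⬝ᵥ W.mulVec xF)) ≤ ε) :
    f xN - f xstar ≤ ε ∧
    Real.sqrt (hW.sqrt.mulVec xN ⬝ᵥ hW.sqrt.mulVec xN) ≤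
      6 * ε / Real.sqrt (ystar ⬝ᵥ ystar) ∧
    2 * Real.sqrt (ystar ⬝ᵥ ystar) / lam + Real.sqrt (2 * ε / lam) =
      4 * ε / Real.sqrt (ystar ⬝ᵥ ystar) + 2 * ε / Real.sqrt (ystar ⬝ᵥ ystar) := by
  set R := √(ystar ⬝ᵥ ystar)
  have hyy : 0 ≤ ystar ⬝ᵥ ystar := Finset.sum_nonneg fun i _ => mul_self_nonneg (ystar i)
  have hlam_eq : lam = R ^ 2 / (2 * ε) := by rw [hlamdef, Real.sq_sqrt hyy]
  have hlam : 0 < lam := by rw [hlam_eq]; positivity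
  have hFN : f xN + lam / 2 * (hW.sqrt *ᵥ xN ⬝ᵥ hW.sqrt *ᵥ xN) ≤ f xstar + ε := by
    have hstar := hxF xstar
    rw [hW.dotProduct_mulVec_eq_dotProduct_sqrt_mulVec xstar, hfeas, dotProduct_zero] at hstar
    rw [hW.dotProduct_mulVec_eq_dotProduct_sqrt_mulVec] at hN
    linarith
  obtain ⟨hgap, hviolation⟩ := penalty_constraint_gap f hW.sqrt hlam hε.le hfeas (hlag xN) hFN
  have hbound := hlam_eq ▸ two_mul_div_add_sqrt_eq hRy hε
  refine ⟨hgap, ?_, hbound⟩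
  calc √(hW.sqrt *ᵥ xN ⬝ᵥ hW.sqrt *ᵥ xN) ≤ 2 * R / lam + √(2 * ε / lam) := hviolation
    _ = 6 * ε / R := by rw [hbound]; ring

/-- Constraint gap with the choice `λ = ‖y*‖²/(2ε)`: an `ε`-minimizer `x^N` of `F`
satisfies `f(x^N) − f(x*) ≤ ε` and `‖√W x^N‖ ≤ 6ε/‖y*‖`; in particular the generic
bound `2R_y/λ + √(2ε/λ)` evaluates to `4ε/R_y + 2ε/R_y`. -/
theorem stmt6 {N : ℕ} (f : (Fin N → ℝ) → ℝ) (hf : ConvexOn ℝ Set.univ f)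
    (W : Matrix (Fin N) (Fin N) ℝ) (hW : W.PosSemidef)
    (lam ε : ℝ) (hε : 0 < ε)
    (xstar ystar xF xN : Fin N → ℝ)
    (hRy : 0 < Real.sqrt (ystar ⬝ᵥ ystar))
    (hlamdef : lam = (ystar ⬝ᵥ ystar) / (2 * ε))
    (hfeas : hW.sqrt.mulVec xstar = 0)
    (hlag : ∀ x : Fin N → ℝ,
      f xstar - ystar ⬝ᵥ hW.sqrt.mulVec xstar ≤ f x - ystar ⬝ᵥ hW.sqrt.mulVec x)
    (hxF : ∀ y : Fin N → ℝ,
      f xF + lam / 2 * (xF ⬝ᵥ W.mulVec xF) ≤ f y + lam / 2 * (y ⬝ᵥ W.mulVec y))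
    (hN : f xN + lam / 2 * (xN ⬝ᵥ W.mulVec xN)
        - (f xF + lam / 2 * (xF ⬝ᵥ W.mulVec xF)) ≤ ε) :
    f xN - f xstar ≤ ε ∧
    Real.sqrt (hW.sqrt.mulVec xN ⬝ᵥ hW.sqrt.mulVec xN) ≤
      6 * ε / Real.sqrt (ystar ⬝ᵥ ystar) ∧
    2 * Real.sqrt (ystar ⬝ᵥ ystar) / lam + Real.sqrt (2 * ε / lam) =
      4 * ε / Real.sqrt (ystar ⬝ᵥ ystar) + 2 * ε / Real.sqrt (ystar ⬝ᵥ ystar) :=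
  stmt6_general f W hW lam ε hε xstar ystar xF xN hRy hlamdef hfeas hlag hxF hN
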